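/- Let G be a graph, (V_0, V_1, ...) a layering of G, and I ⊆ ℕ a finite nonempty set of indices. For j ≥ 0 let d_j := min_{i∈I} |j − i|, and for i ≥ 0 let W_i := ∪{V_j : d_j = i}. Then (W_0, W_1, ...) is a layering of G, each W_i is a union of at most 2|I| of the original layers, and every vertex lying in a layer V_j with j ∈ I belongs to W_0. -/

import Mathlib

open SimpleGraph Set

/-- A layering of a graph: an ordered partition `(L 0, L 1, …)` of the vertex set
such that every edge joins vertices in the same or consecutive layers. -/
def IsLayering {α : Type} (G : SimpleGraph α) (L : ℕ → Set α) : Prop :=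
  (∀ v, ∃! i, v ∈ L i) ∧
  ∀ ⦃v w : α⦄, G.Adj v w → ∀ ⦃i j : ℕ⦄, v ∈ L i → w ∈ L j → i ≤ j + 1 ∧ j ≤ i + 1

/-- A tree-decomposition of `G` with tree `tG` and bags `B`. -/
def IsTreeDecomp {α T : Type} (G : SimpleGraph α) (tG : SimpleGraph T) (B : T → Set α) : Prop :=
  tG.IsTree ∧
  (∀ v : α, (tG.induce {x | v ∈ B x}).Connected) ∧
  (∀ ⦃v w : α⦄, G.Adj v w → ∃ x, v ∈ B x ∧ w ∈ B x)

/-- `G` has treewidth (strictly) less than `k`: a tree-decomposition with bags of size at most `k`. -/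
def TreewidthLT {α : Type} (G : SimpleGraph α) (k : ℕ) : Prop :=
  ∃ (T : Type) (tG : SimpleGraph T) (B : T → Set α),
    IsTreeDecomp G tG B ∧ ∀ x, (B x).encard ≤ k

/-- `G` has treewidth at most `t`. -/
def TreewidthAtMost {α : Type} (G : SimpleGraph α) (t : ℕ) : Prop :=
  TreewidthLT G (t + 1)

/-- Maximum degree at most `Δ`. -/
def MaxDegreeLE {α : Type} (G : SimpleGraph α) (Δ : ℕ) : Prop :=
  ∀ v, (G.neighborSet v).encard ≤ Δ

/-- A colouring `f` has clustering at most `s`: every monochromatic component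
(the set of vertices joined to `v` by a monochromatic walk) has at most `s` vertices. -/
def HasClustering {α β : Type} (G : SimpleGraph α) (f : α → β) (s : ℕ) : Prop :=
  ∀ v : α, {w | ∃ p : G.Walk v w, ∀ u ∈ p.support, f u = f v}.encard ≤ s

/-- Quotient graph of a graph by an indexed partition. -/
def QuotGraph {α ι : Type} (G : SimpleGraph α) (P : ι → Set α) : SimpleGraph ι where
  Adj x y := x ≠ y ∧ ∃ v w, v ∈ P x ∧ w ∈ P y ∧ G.Adj v w
  symm := by constructor; rintro x y ⟨h, v, w, hv, hw, hvw⟩; exact ⟨h.symm, w, v, hw, hv, hvw.symm⟩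
  loopless := by constructor; rintro x ⟨h, _⟩; exact h rfl

/-- The strong product of two graphs. -/
def StrongProd {α β : Type} (A : SimpleGraph α) (B : SimpleGraph β) : SimpleGraph (α × β) where
  Adj x y := x ≠ y ∧ (x.1 = y.1 ∨ A.Adj x.1 y.1) ∧ (x.2 = y.2 ∨ B.Adj x.2 y.2)
  symm := by
    constructor; rintro x y ⟨h, h1, h2⟩
    exact ⟨h.symm, h1.imp Eq.symm Adj.symm, h2.imp Eq.symm Adj.symm⟩
  loopless := by constructor; rintro x ⟨h, _⟩; exact h rfl

/-- The one-way infinite path on `ℕ`. -/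
def NatPath : SimpleGraph ℕ where
  Adj i j := j = i + 1 ∨ i = j + 1
  symm := by constructor; rintro i j (h | h); exacts [Or.inr h, Or.inl h]
  loopless := by constructor; rintro i (h | h) <;> omega

/-- The `p`-th power of a graph: join vertices at distance between 1 and `p`. -/
def PowerGraph {α : Type} (G : SimpleGraph α) (p : ℕ) : SimpleGraph α where
  Adj v w := v ≠ w ∧ ∃ q : G.Walk v w, q.length ≤ p
  symm := by constructor; rintro v w ⟨h, q, hq⟩; exact ⟨h.symm, q.reverse, by simpa using hq⟩
  loopless := by constructor; rintro v ⟨h, _⟩; exact h rfl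

/-- `G` has layered treewidth at most `k`. -/
def LayeredTreewidthLE {α : Type} (G : SimpleGraph α) (k : ℕ) : Prop :=
  ∃ (T : Type) (tG : SimpleGraph T) (B : T → Set α) (L : ℕ → Set α),
    IsTreeDecomp G tG B ∧ IsLayering G L ∧ ∀ x i, (B x ∩ L i).encard ≤ k

/-- An `H`-partition of `G`: parts indexed by vertices of `H` such that every edge of `G`
lies within a part or between parts adjacent in `H`. -/
def IsGraphPartition {α ι : Type} (G : SimpleGraph α) (H : SimpleGraph ι) (A : ι → Set α) : Prop :=
  (∀ v, ∃! x, v ∈ A x) ∧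
  ∀ ⦃v w : α⦄, G.Adj v w → ∀ ⦃x y : ι⦄, v ∈ A x → w ∈ A y → x = y ∨ H.Adj x y

/-- A `(k,ℓ)`-partition: a partition into nonempty parts whose quotient has treewidth at
most `k`, having layered width at most `ℓ` with respect to some layering. -/
def HasKLPartition {α : Type} (G : SimpleGraph α) (k ℓ : ℕ) : Prop :=
  ∃ (ι : Type) (P : ι → Set α),
    (∀ v, ∃! x, v ∈ P x) ∧ (∀ x, (P x).Nonempty) ∧
    TreewidthAtMost (QuotGraph G P) k ∧
    ∃ L, IsLayering G L ∧ ∀ x i, (P x ∩ L i).encard ≤ ℓ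

theorem IsLayering.regroup {α : Type} {G : SimpleGraph α} {V : ℕ → Set α} (hV : IsLayering G V)
    {f : ℕ → ℕ} (hf : ∀ a b, a ≤ b + 1 → b ≤ a + 1 → f a ≤ f b + 1) :
    IsLayering G fun i => {v | ∃ j, f j = i ∧ v ∈ V j} := by
  refine ⟨fun v => ?_, ?_⟩
  · obtain ⟨j, hvj, hj_unique⟩ := hV.1 v
    refine ⟨f j, ⟨j, rfl, hvj⟩, ?_⟩
    rintro _ ⟨j', rfl, hvj'⟩
    rw [hj_unique j' hvj']
  · rintro v w hvw _ _ ⟨a, rfl, hva⟩ ⟨b, rfl, hwb⟩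
    obtain ⟨hab, hba⟩ := hV.2 hvw hva hwb
    exact ⟨hf a b hab hba, hf b a hba hab⟩

section DistToFinset

variable (I : Finset ℕ) (hI : I.Nonempty)

theorem inf'_absDiff_le_succ {a b : ℕ} (hab : a ≤ b + 1) (hba : b ≤ a + 1) :
    I.inf' hI (fun i => max a i - min a i) ≤ I.inf' hI (fun i => max b i - min b i) + 1 := by
  obtain ⟨k, hk, hbk⟩ := I.exists_mem_eq_inf' hI fun i => max b i - min b i
  have hak := I.inf'_le (fun i => max a i - min a i) hk
  omega

theorem inf'_absDiff_eq_zero_of_mem {j : ℕ} (hj : j ∈ I) :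
    I.inf' hI (fun i => max j i - min j i) = 0 :=
  Nat.eq_zero_of_le_zero <| (I.inf'_le _ hj).trans_eq (by simp)

/-- A value `r` of the distance to `I` is attained at most twice per element `k ∈ I`,
namely only at `k + r` and `k - r`. -/
theorem encard_setOf_inf'_absDiff_eq_le (r : ℕ) :
    {j | I.inf' hI (fun i => max j i - min j i) = r}.encard ≤ ((2 * I.card : ℕ) : ℕ∞) := by
  have hsub : {j | I.inf' hI (fun i => max j i - min j i) = r} ⊆
      ↑(I.image (· + r) ∪ I.image (· - r)) := by
    intro j hj
    obtain ⟨k, hk, hjk⟩ := I.exists_mem_eq_inf' hI fun i => max j i - min j i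
    replace hj : max j k - min j k = r := hjk ▸ hj
    simp only [Finset.coe_union, Finset.coe_image, Set.mem_union, Set.mem_image, Finset.mem_coe]
    rcases le_total k j with hkj | hjk_le
    · exact Or.inl ⟨k, hk, by omega⟩
    · exact Or.inr ⟨k, hk, by omega⟩
  calc _ ≤ ((I.image (· + r) ∪ I.image (· - r)).card : ℕ∞) :=
        (Set.encard_mono hsub).trans_eq (Set.encard_coe_eq_coe_finsetCard _)
    _ ≤ ((2 * I.card : ℕ) : ℕ∞) := by
        gcongr
        calc _ ≤ (I.image (· + r)).card + (I.image (· - r)).card := Finset.card_union_le _ _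
          _ ≤ I.card + I.card := add_le_add Finset.card_image_le Finset.card_image_le
          _ = 2 * I.card := (two_mul _).symm

end DistToFinset

/-- Re-layering towards a finite set `I` of indices. With `d j` the distance
from `j` to `I` and `W i` the union of the layers `V j` with `d j = i`: `(W 0, W 1, …)` is a
layering of `G`, each `W i` is the union of at most `2|I|` original layers, and every layer
`V j` with `j ∈ I` is contained in `W 0`. -/
theorem stmt19 {α : Type} (G : SimpleGraph α) (V : ℕ → Set α) (hV : IsLayering G V)
    (I : Finset ℕ) (hI : I.Nonempty)
    (d : ℕ → ℕ) (hd : ∀ j, d j = I.inf' hI fun i => max j i - min j i)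
    (W : ℕ → Set α) (hW : ∀ i, W i = {v | ∃ j, d j = i ∧ v ∈ V j}) :
    IsLayering G W ∧ (∀ i, {j | d j = i}.encard ≤ ((2 * I.card : ℕ) : ℕ∞)) ∧
      ∀ j ∈ I, V j ⊆ W 0 := by
  obtain rfl : d = _ := funext hd
  obtain rfl : W = _ := funext hW
  refine ⟨hV.regroup fun a b => inf'_absDiff_le_succ I hI, encard_setOf_inf'_absDiff_eq_le I hI,
    fun j hj v hv => ⟨j, inf'_absDiff_eq_zero_of_mem I hI hj, hv⟩⟩
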